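/- arXiv:1911.07327 — 2 statements merged into one kernel-verified Lean document; each statement's English description precedes it below -/
import Mathlib

section
/- Let n ≥ 2, let m ∈ ℕ₀, let V be a finite-dimensional real inner product space, and let N be a finite-dimensional subspace of the space of V-valued polynomials on ℝⁿ of degree at most m. For a bounded open connected set U ⊂ ℝⁿ let Π_U denote the L²(U)-orthogonal projection of L²(U;V) onto (the restrictions to U of) N. Then there exists a constant c > 0 depending only on n, m, dim V (and not on the ball or λ) such that for every ball B and every λ ∈ [0,1/2], with U denoting either B or the annulus B \ λB̄, the projection Π_U extends to L¹(U;V) and satisfies ⨍_U |Π_U u| dx ≤ c ⨍_U |u| dx for all u ∈ L¹(U;V). -/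
open MeasureTheory Metric Filter Topology Bornology
open scoped ENNReal NNReal

noncomputable section

/-- Euclidean space `ℝⁿ`. -/
abbrev Rn (n : ℕ) : Type := EuclideanSpace ℝ (Fin n)

/-- The size `|α|` of a multi-index `α ∈ ℕ₀ⁿ`. -/
def msize {n : ℕ} (α : Fin n → ℕ) : ℕ := ∑ i, α i

/-- Partial derivative in the `i`-th coordinate direction. -/
def pderiv1 {n : ℕ} {V : Type*} [NormedAddCommGroup V] [NormedSpace ℝ V]
    (i : Fin n) (f : Rn n → V) : Rn n → V :=
  fun x => fderiv ℝ f x (EuclideanSpace.single i 1)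

/-- Iterated partial derivative `∂^α`. -/
def mpderiv {n : ℕ} {V : Type*} [NormedAddCommGroup V] [NormedSpace ℝ V]
    (α : Fin n → ℕ) (f : Rn n → V) : Rn n → V :=
  (List.finRange n).foldr (fun i g => (pderiv1 i)^[α i] g) f

/-- The (finite) set of multi-indices of size exactly `d`. -/
def mIdx (n d : ℕ) : Finset (Fin n → ℕ) :=
  ((Finset.univ : Finset (Fin n → Fin (d+1))).image
    (fun α i => (α i : ℕ))).filter (fun α => msize α = d)

/-- The (finite) set of multi-indices of size `< k`. -/
def mIdxLt (n k : ℕ) : Finset (Fin n → ℕ) :=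
  ((Finset.univ : Finset (Fin n → Fin (k+1))).image
    (fun α i => (α i : ℕ))).filter (fun α => msize α < k)

/-- The (finite) set of multi-indices of size `≤ m`. -/
def mIdxLe (n m : ℕ) : Finset (Fin n → ℕ) :=
  ((Finset.univ : Finset (Fin n → Fin (m+1))).image
    (fun α i => (α i : ℕ))).filter (fun α => msize α ≤ m)

/-- A `k`-th order homogeneous constant-coefficient linear differential operator
`A = ∑_{|α| = k} A_α ∂^α` from `V`-valued to `W`-valued functions on `ℝⁿ`. -/
structure DiffOp (n k : ℕ) (V W : Type*) [NormedAddCommGroup V] [NormedSpace ℝ V]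
    [NormedAddCommGroup W] [NormedSpace ℝ W] where
  coeff : (Fin n → ℕ) → (V →ₗ[ℝ] W)
  homog : ∀ α, msize α ≠ k → coeff α = 0

namespace DiffOp

variable {n k : ℕ} {V W : Type*}
  [NormedAddCommGroup V] [InnerProductSpace ℝ V] [FiniteDimensional ℝ V]
  [NormedAddCommGroup W] [InnerProductSpace ℝ W] [FiniteDimensional ℝ W]

/-- `A` applied to a (smooth) function. -/
def app (A : DiffOp n k V W) (f : Rn n → V) (x : Rn n) : W :=
  ∑ α ∈ mIdx n k, A.coeff α (mpderiv α f x)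

/-- The formal adjoint `A* φ = (-1)^k ∑_{|α| = k} A_α† ∂^α φ`. -/
def formalAdjoint (A : DiffOp n k V W) (φ : Rn n → W) (x : Rn n) : V :=
  ((-1 : ℝ)^k) • ∑ α ∈ mIdx n k, LinearMap.adjoint (A.coeff α) (mpderiv α φ x)

/-- `ℂ`-ellipticity: the complexified symbol `A[ξ] : V + iV → W + iW` is injective for
every `ξ ∈ ℂⁿ \ {0}`; an element `v₁ + i v₂` of the complexification is encoded as the
pair `(v₁, v₂)`, and the real resp. imaginary part of `A[ξ](v₁ + i v₂)` are spelled out. -/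
def IsCelliptic (A : DiffOp n k V W) : Prop :=
  ∀ ξ : Fin n → ℂ, ξ ≠ 0 → ∀ v₁ v₂ : V,
    (∑ α ∈ mIdx n k, ((∏ i, (ξ i)^(α i)).re • A.coeff α v₁
        - (∏ i, (ξ i)^(α i)).im • A.coeff α v₂)) = 0 →
    (∑ α ∈ mIdx n k, ((∏ i, (ξ i)^(α i)).re • A.coeff α v₂
        + (∏ i, (ξ i)^(α i)).im • A.coeff α v₁)) = 0 →
    v₁ = 0 ∧ v₂ = 0

end DiffOp

section Defs

variable {n k : ℕ} {V W : Type*}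
  [NormedAddCommGroup V] [InnerProductSpace ℝ V] [FiniteDimensional ℝ V]
  [NormedAddCommGroup W] [InnerProductSpace ℝ W] [FiniteDimensional ℝ W]

/-- `u ∈ BV^A_loc(ℝⁿ)` with `Au = σ ν` (polar decomposition) and `|Au| = ν`:
`u` is locally integrable, `ν` is a locally finite positive measure, `σ` has unit length
`ν`-a.e., and `∫ ⟨u, A*φ⟩ dx = ∫ ⟨φ, σ⟩ dν` for all test functions `φ`. -/
structure IsBVAloc (A : DiffOp n k V W) (u : Rn n → V) (ν : Measure (Rn n))
    (σ : Rn n → W) : Prop where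
  locInt : LocallyIntegrable u volume
  locFin : ∀ K : Set (Rn n), IsCompact K → ν K < ⊤
  unit : ∀ᵐ x ∂ν, ‖σ x‖ = 1
  aesm : AEStronglyMeasurable σ ν
  repr : ∀ φ : Rn n → W, ContDiff ℝ (⊤ : ℕ∞) φ → HasCompactSupport φ →
    ∫ x, (inner ℝ (u x) (A.formalAdjoint φ x) : ℝ) = ∫ x, (inner ℝ (φ x) (σ x) : ℝ) ∂ν

/-- `u ∈ BV^A(ℝⁿ)` with `Au = σ ν` and total variation `|Au| = ν`, a finite measure. -/
structure IsBVA (A : DiffOp n k V W) (u : Rn n → V) (ν : Measure (Rn n))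
    (σ : Rn n → W) : Prop where
  integ : Integrable u volume
  fin : ν Set.univ ≠ ⊤
  unit : ∀ᵐ x ∂ν, ‖σ x‖ = 1
  aesm : AEStronglyMeasurable σ ν
  repr : ∀ φ : Rn n → W, ContDiff ℝ (⊤ : ℕ∞) φ → HasCompactSupport φ →
    ∫ x, (inner ℝ (u x) (A.formalAdjoint φ x) : ℝ) = ∫ x, (inner ℝ (φ x) (σ x) : ℝ) ∂ν

/-- `u ∈ BV^A(Ω)` with `Au = σ ν` and total variation `|Au| = ν`, a finite measure on `Ω`. -/
structure IsBVAOn (A : DiffOp n k V W) (Ω : Set (Rn n)) (u : Rn n → V)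
    (ν : Measure (Rn n)) (σ : Rn n → W) : Prop where
  integ : IntegrableOn u Ω volume
  fin : ν Set.univ ≠ ⊤
  outside : ν Ωᶜ = 0
  unit : ∀ᵐ x ∂ν, ‖σ x‖ = 1
  aesm : AEStronglyMeasurable σ ν
  repr : ∀ φ : Rn n → W, ContDiff ℝ (⊤ : ℕ∞) φ → HasCompactSupport φ → tsupport φ ⊆ Ω →
    ∫ x in Ω, (inner ℝ (u x) (A.formalAdjoint φ x) : ℝ) = ∫ x, (inner ℝ (φ x) (σ x) : ℝ) ∂ν

/-- The nullspace `N(A)` of `A` (smooth pointwise solutions of `A p = 0`). -/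
def nullSp (A : DiffOp n k V W) : Set (Rn n → V) :=
  {p | ContDiff ℝ (⊤ : ℕ∞) p ∧ ∀ x, A.app p x = 0}

/-- `p = Π_U u` is the `L²(U)`-orthogonal projection of `u` onto the nullspace `N(A)`
(characterized by membership and orthogonality; this characterization also gives the
canonical extension of `Π_U` to `L¹(U)`). -/
def IsProjOn (A : DiffOp n k V W) (U : Set (Rn n)) (u p : Rn n → V) : Prop :=
  p ∈ nullSp A ∧ ∀ q ∈ nullSp A, ∫ x in U, (inner ℝ (u x - p x) (q x) : ℝ) = 0

end Defs

section VDefs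

variable {n : ℕ} {V : Type*} [NormedAddCommGroup V] [NormedSpace ℝ V]

/-- `x₀` is a Lebesgue point of `u`. -/
def IsLebPoint (u : Rn n → V) (x₀ : Rn n) : Prop :=
  ∃ v : V, Tendsto (fun s : ℝ => ⨍ x in ball x₀ s, ‖u x - v‖) (𝓝[>] 0) (𝓝 0)

/-- `p` is a (`V`-valued) polynomial of degree at most `m`. -/
def PolyDeg (m : ℕ) (p : Rn n → V) : Prop :=
  ContDiff ℝ (⊤ : ℕ∞) p ∧ ∀ x, iteratedFDeriv ℝ (m+1) p x = 0

/-- `g = ∂^α u` weakly (on all of `ℝⁿ`). -/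
def IsWeakDeriv (α : Fin n → ℕ) (u g : Rn n → V) : Prop :=
  ∀ φ : Rn n → ℝ, ContDiff ℝ (⊤ : ℕ∞) φ → HasCompactSupport φ →
    ∫ x, φ x • g x = ((-1:ℝ)^(msize α)) • ∫ x, mpderiv α φ x • u x

/-- `g = ∂^α u` weakly on `Ω`. -/
def IsWeakDerivOn (Ω : Set (Rn n)) (α : Fin n → ℕ) (u g : Rn n → V) : Prop :=
  ∀ φ : Rn n → ℝ, ContDiff ℝ (⊤ : ℕ∞) φ → HasCompactSupport φ → tsupport φ ⊆ Ω →
    ∫ x in Ω, φ x • g x = ((-1:ℝ)^(msize α)) • ∫ x in Ω, mpderiv α φ x • u x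

/-- The canonical smooth bump function adapted to the ball `B(x₀, r)`:
nonnegative, smooth, supported in `B(x₀, r)` and of unit integral. -/
def stdBump (x₀ : Rn n) (r : ℝ) : Rn n → ℝ :=
  if h : 0 < r then
    ContDiffBump.normed (c := x₀) ⟨r/2, r, by linarith, by linarith⟩ volume
  else 0

/-- The averaged Taylor polynomial of order `m` of `u` with respect to the bump `φ`,
`P^m u(x) = ∑_{|α| ≤ m} ((-1)^{|α|}/α!) ∫ ∂_y^α (φ(y) (x-y)^α) u(y) dy`, where the
derivatives of `u` have been moved onto the bump by integration by parts. -/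
def avgTaylor (m : ℕ) (φ : Rn n → ℝ) (u : Rn n → V) (x : Rn n) : V :=
  ∑ α ∈ mIdxLe n m,
    (((-1:ℝ)^(msize α)) / ∏ i, (Nat.factorial (α i) : ℝ)) •
      ∫ y, mpderiv α (fun z => φ z * ∏ i, (x i - z i) ^ (α i)) y • u y

end VDefs



namespace PolyProjAux

variable {E F : Type*} [NormedAddCommGroup E] [NormedSpace ℝ E]
  [NormedAddCommGroup F] [NormedSpace ℝ F]

theorem itfd_step {f : E → F} (hf : ContDiff ℝ (⊤ : ℕ∞) f) {i : ℕ} {x₀ : E}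
    (h : ∀ x, iteratedFDeriv ℝ (i+1) f x = 0) (h0 : iteratedFDeriv ℝ i f x₀ = 0) :
    ∀ x, iteratedFDeriv ℝ i f x = 0 := by
  intro x
  have hd : Differentiable ℝ (iteratedFDeriv ℝ i f) :=
    hf.differentiable_iteratedFDeriv (by exact_mod_cast ENat.coe_lt_top i)
  have hz : ∀ y, fderiv ℝ (iteratedFDeriv ℝ i f) y = 0 := by
    intro y
    have : fderiv ℝ (iteratedFDeriv ℝ i f) y
        = continuousMultilinearCurryLeftEquiv ℝ (fun _ : Fin (i + 1) => E) F
          (iteratedFDeriv ℝ (i+1) f y) := by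
      rw [fderiv_iteratedFDeriv]; rfl
    rw [this, h y]
    exact (continuousMultilinearCurryLeftEquiv ℝ (fun _ : Fin (i+1) => E) F).map_zero
  have := is_const_of_fderiv_eq_zero hd hz x x₀
  rw [this, h0]

theorem itfd_zero_of_jets {f : E → F} (hf : ContDiff ℝ (⊤ : ℕ∞) f) {k : ℕ} {x₀ : E}
    (htop : ∀ x, iteratedFDeriv ℝ (k+1) f x = 0)
    (hjet : ∀ i, i ≤ k → iteratedFDeriv ℝ i f x₀ = 0) : ∀ x, f x = 0 := by
  have main : ∀ j i, i + j = k + 1 → ∀ x, iteratedFDeriv ℝ i f x = 0 := by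
    intro j
    induction j with
    | zero =>
      intro i hi x
      obtain rfl : i = k + 1 := by omega
      exact htop x
    | succ j IH =>
      intro i hi x
      exact itfd_step hf (IH (i+1) (by omega)) (hjet i (by omega)) x
  intro x
  have h0 := main (k+1) 0 (by omega) x
  have := congrArg (fun M => M (fun _ : Fin 0 => (0:E))) h0
  simpa [iteratedFDeriv_zero_apply] using this

theorem poly_zero_of_zero_on_open {f : E → F} (hf : ContDiff ℝ (⊤ : ℕ∞) f) {k : ℕ}
    (htop : ∀ x, iteratedFDeriv ℝ (k+1) f x = 0) {s : Set E} (hs : IsOpen s)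
    {x₀ : E} (hx₀ : x₀ ∈ s) (hz : ∀ x ∈ s, f x = 0) : ∀ x, f x = 0 := by
  refine itfd_zero_of_jets (x₀ := x₀) hf htop (fun i _ => ?_)
  have hev0 : ∀ᶠ y in 𝓝 x₀, f y = (0:F) :=
    Filter.eventually_of_mem (hs.mem_nhds hx₀) hz
  have hev : f =ᶠ[𝓝[Set.univ] x₀] (fun _ => (0:F)) := hev0.filter_mono nhdsWithin_le_nhds
  have h1 : iteratedFDerivWithin ℝ i f Set.univ x₀
      = iteratedFDerivWithin ℝ i (fun _ => (0:F)) Set.univ x₀ :=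
    hev.iteratedFDerivWithin_eq (hz x₀ hx₀) i
  rw [iteratedFDerivWithin_univ, iteratedFDerivWithin_univ] at h1
  rw [h1, iteratedFDeriv_zero_fun]; rfl

theorem itfd_comp_const_add (a : E) {f : E → F} (hf : ContDiff ℝ (⊤ : ℕ∞) f) (k : ℕ) :
    ∀ x, iteratedFDeriv ℝ k (fun y => f (a + y)) x = iteratedFDeriv ℝ k f (a + x) := by
  induction k with
  | zero => intro x; ext m; simp
  | succ k IH =>
    intro x; ext m
    rw [iteratedFDeriv_succ_apply_left, iteratedFDeriv_succ_apply_left]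
    have hg : iteratedFDeriv ℝ k (fun y => f (a + y)) = fun y => iteratedFDeriv ℝ k f (a + y) :=
      funext IH
    rw [hg]
    have h1 : HasFDerivAt (iteratedFDeriv ℝ k f) (fderiv ℝ (iteratedFDeriv ℝ k f) (a + x)) (a + x) :=
      ((hf.differentiable_iteratedFDeriv (by exact_mod_cast ENat.coe_lt_top k)) (a+x)).hasFDerivAt
    have h2 : HasFDerivAt (fun y : E => a + y) (ContinuousLinearMap.id ℝ E) x := by
      simpa using (hasFDerivAt_id x).const_add a
    have h3 := h1.comp x h2
    rw [ContinuousLinearMap.comp_id] at h3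
    have h3' : HasFDerivAt (fun y => iteratedFDeriv ℝ k f (a + y))
        (fderiv ℝ (iteratedFDeriv ℝ k f) (a + x)) x := h3
    rw [h3'.fderiv]

theorem itfd_comp_smul_eq_zero {f : E → F} (hf : ContDiff ℝ (⊤ : ℕ∞) f) {k : ℕ}
    (h : ∀ x, iteratedFDeriv ℝ k f x = 0) (r : ℝ) :
    ∀ x, iteratedFDeriv ℝ k (fun y => f (r • y)) x = 0 := by
  intro x
  have hg : (fun y : E => f (r • y)) = f ∘ (r • ContinuousLinearMap.id ℝ E) := by
    funext y; simp
  rw [hg, ContinuousLinearMap.iteratedFDeriv_comp_right _ hf _ (by exact_mod_cast le_top), h]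
  ext m; simp


def polySub (n m : ℕ) (V : Type*) [NormedAddCommGroup V] [NormedSpace ℝ V] :
    Submodule ℝ (Rn n → V) where
  carrier := {p | ContDiff ℝ (⊤ : ℕ∞) p ∧ ∀ x, iteratedFDeriv ℝ (m+1) p x = 0}
  add_mem' := fun {p q} hp hq => ⟨hp.1.add hq.1, fun x => by
    have : iteratedFDeriv ℝ (m+1) (p + q) x
        = iteratedFDeriv ℝ (m+1) p x + iteratedFDeriv ℝ (m+1) q x :=
      iteratedFDeriv_add_apply (hp.1.of_le (by exact_mod_cast le_top)).contDiffAt (hq.1.of_le (by exact_mod_cast le_top)).contDiffAt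
    rw [this, hp.2 x, hq.2 x, add_zero]⟩
  zero_mem' := ⟨contDiff_const, fun x => by
    have : (0 : Rn n → V) = fun _ => (0:V) := rfl
    rw [this, iteratedFDeriv_zero_fun]; rfl⟩
  smul_mem' := fun c p hp => ⟨hp.1.const_smul c, fun x => by
    have : iteratedFDeriv ℝ (m+1) (c • p) x = c • iteratedFDeriv ℝ (m+1) p x :=
      iteratedFDeriv_const_smul_apply (hp.1.of_le (by exact_mod_cast le_top)).contDiffAt
    rw [this, hp.2 x, smul_zero]⟩

variable {n m : ℕ} {V : Type*} [NormedAddCommGroup V] [NormedSpace ℝ V]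

theorem polySub_contDiff {p : Rn n → V} (hp : p ∈ polySub n m V) : ContDiff ℝ (⊤ : ℕ∞) p := hp.1

theorem polySub_rigid {p : Rn n → V} (hp : p ∈ polySub n m V) {s : Set (Rn n)}
    (hs : IsOpen s) {x₀ : Rn n} (hx₀ : x₀ ∈ s) (hz : ∀ x ∈ s, p x = 0) : ∀ x, p x = 0 :=
  poly_zero_of_zero_on_open hp.1 hp.2 hs hx₀ hz

theorem polySub_comp_affine {p : Rn n → V} (hp : p ∈ polySub n m V) (a : Rn n) (r : ℝ) :
    (fun y => p (a + r • y)) ∈ polySub n m V := by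
  have hg : ContDiff ℝ (⊤ : ℕ∞) (fun z : Rn n => p (a + z)) :=
    hp.1.comp (contDiff_const.add contDiff_id)
  have hgz : ∀ x, iteratedFDeriv ℝ (m+1) (fun z : Rn n => p (a + z)) x = 0 := by
    intro x
    rw [itfd_comp_const_add a hp.1 (m+1) x]
    exact hp.2 (a + x)
  refine ⟨?_, ?_⟩
  · exact hp.1.comp (contDiff_const.add (contDiff_id.const_smul r))
  · exact itfd_comp_smul_eq_zero hg hgz r

variable [FiniteDimensional ℝ V]

instance instFinDimCMM {i : ℕ} :
    FiniteDimensional ℝ (ContinuousMultilinearMap ℝ (fun _ : Fin i => Rn n) V) :=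
  FiniteDimensional.of_injective
    (ContinuousMultilinearMap.toMultilinearMapLinear (R' := ℝ))
    (fun a b hab => by ext v; exact MultilinearMap.congr_fun hab v)

instance polySub_findim : FiniteDimensional ℝ (polySub n m V) := by
  let J : polySub n m V →ₗ[ℝ]
      (∀ i : Fin (m+1), ContinuousMultilinearMap ℝ (fun _ : Fin (i:ℕ) => Rn n) V) :=
    { toFun := fun p => fun i => iteratedFDeriv ℝ i (p : Rn n → V) 0
      map_add' := fun p q => by
        funext i
        exact iteratedFDeriv_add_apply (p.2.1.of_le (by exact_mod_cast le_top)).contDiffAt (q.2.1.of_le (by exact_mod_cast le_top)).contDiffAt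
      map_smul' := fun c p => by
        funext i
        exact iteratedFDeriv_const_smul_apply (p.2.1.of_le (by exact_mod_cast le_top)).contDiffAt }
  have hJ : Function.Injective J := by
    rw [injective_iff_map_eq_zero]
    intro p hp
    have hjet : ∀ i, i ≤ m → iteratedFDeriv ℝ i (p : Rn n → V) 0 = 0 := by
      intro i hi
      have := congrFun hp ⟨i, by omega⟩
      exact this
    have hz := itfd_zero_of_jets p.2.1 p.2.2 hjet
    exact Subtype.ext (funext hz)
  exact FiniteDimensional.of_injective J hJ



variable {n m : ℕ}

theorem setIntegral_scale (x₀ : Rn n) {r : ℝ} (hr : 0 < r) (f : Rn n → ℝ)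
    {A : Set (Rn n)} (hA : MeasurableSet A) :
    ∫ x in A, f x = r ^ n * ∫ y in (fun y : Rn n => x₀ + r • y) ⁻¹' A, f (x₀ + r • y) := by
  have hmeas : Measurable (fun y : Rn n => x₀ + r • y) :=
    (continuous_const.add (continuous_id.const_smul r)).measurable
  have h1 : ∫ x in A, f x = ∫ x, A.indicator f x := (integral_indicator hA).symm
  have h2 : ∫ x, A.indicator f (x₀ + x) = ∫ x, A.indicator f x :=
    integral_add_left_eq_self (A.indicator f) x₀
  have h3 : ∫ y, A.indicator f (x₀ + r • y)
      = (r ^ n)⁻¹ • ∫ x, A.indicator f (x₀ + x) := by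
    have := Measure.integral_comp_smul_of_nonneg (volume)
      (fun x : Rn n => A.indicator f (x₀ + x)) r (hR := hr.le)
    rw [finrank_euclideanSpace_fin] at this
    exact this
  have h4 : ∀ y, A.indicator f (x₀ + r • y)
      = ((fun y : Rn n => x₀ + r • y) ⁻¹' A).indicator (fun y => f (x₀ + r • y)) y := by
    intro y
    by_cases h : x₀ + r • y ∈ A <;> simp [Set.indicator_apply, h]
  have h5 : ∫ y in (fun y : Rn n => x₀ + r • y) ⁻¹' A, f (x₀ + r • y)
      = ∫ y, A.indicator f (x₀ + r • y) := by
    rw [← integral_indicator (hmeas hA)]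
    exact integral_congr_ae (Filter.Eventually.of_forall fun y => (h4 y).symm)
  rw [h1, ← h2, h5, h3, smul_eq_mul, ← mul_assoc, mul_inv_cancel₀ (by positivity), one_mul]

theorem pre_ball (x₀ : Rn n) {r : ℝ} (hr : 0 < r) (c : ℝ) :
    (fun y : Rn n => x₀ + r • y) ⁻¹' (ball x₀ (c * r)) = ball (0 : Rn n) c := by
  ext y
  simp only [Set.mem_preimage, mem_ball, dist_eq_norm, add_sub_cancel_left, norm_smul,
    Real.norm_eq_abs, abs_of_pos hr, sub_zero]
  rw [mul_comm, ← lt_div_iff₀ hr, mul_div_assoc, div_self hr.ne', mul_one]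

theorem pre_cball (x₀ : Rn n) {r : ℝ} (hr : 0 < r) (c : ℝ) :
    (fun y : Rn n => x₀ + r • y) ⁻¹' (closedBall x₀ (c * r)) = closedBall (0 : Rn n) c := by
  ext y
  simp only [Set.mem_preimage, mem_closedBall, dist_eq_norm, add_sub_cancel_left, norm_smul,
    Real.norm_eq_abs, abs_of_pos hr, sub_zero]
  rw [mul_comm, ← le_div_iff₀ hr, mul_div_assoc, div_self hr.ne', mul_one]


section UnitEst
variable {n m : ℕ} {V : Type*} [NormedAddCommGroup V] [NormedSpace ℝ V] [FiniteDimensional ℝ V]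

theorem unit_est (hn : 0 < n) (m : ℕ) :
    ∃ C : ℝ, 0 < C ∧ ∀ p ∈ polySub n m V, ∀ x ∈ closedBall (0:Rn n) 1,
      ‖p x‖ ≤ C * ∫ y in ball (0:Rn n) 1 \ closedBall 0 (1/2), ‖p y‖ := by
  classical
  set P := polySub n m V with hP
  set A₀ : Set (Rn n) := ball (0:Rn n) 1 \ closedBall 0 (1/2) with hA₀def
  have hA₀open : IsOpen A₀ := isOpen_ball.sdiff isClosed_closedBall
  have hA₀meas : MeasurableSet A₀ := hA₀open.measurableSet
  have hA₀sub : A₀ ⊆ closedBall (0:Rn n) 1 := fun y hy => ball_subset_closedBall hy.1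
  have hA₀fin : volume A₀ < ⊤ :=
    lt_of_le_of_lt (measure_mono hA₀sub) (measure_closedBall_lt_top)
  have hA₀ne : A₀.Nonempty := by
    refine ⟨(3/4 : ℝ) • EuclideanSpace.single (⟨0, hn⟩ : Fin n) (1:ℝ), ?_, ?_⟩
    · rw [mem_ball, dist_zero_right, norm_smul, EuclideanSpace.norm_single]
      norm_num
    · rw [mem_closedBall, dist_zero_right, norm_smul, EuclideanSpace.norm_single]
      norm_num
  have hIntOn : ∀ p : Rn n → V, Continuous p → IntegrableOn (fun y => ‖p y‖) A₀ volume :=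
    fun p hp => ((hp.norm.continuousOn).integrableOn_compact
      (isCompact_closedBall (0:Rn n) 1)).mono_set hA₀sub
  rcases subsingleton_or_nontrivial ↥P with hsub | hnt
  · refine ⟨1, one_pos, fun p hp x _ => ?_⟩
    have hp0 : p = 0 := congrArg Subtype.val (Subsingleton.elim (⟨p, hp⟩ : ↥P) 0)
    subst hp0
    simp
  · haveI : FiniteDimensional ℝ ↥P := (polySub_findim)
    set d : ℕ := Module.finrank ℝ ↥P with hd
    have hd1 : 0 < d := Module.finrank_pos
    haveI : Nonempty (Fin d) := ⟨⟨0, hd1⟩⟩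
    obtain ⟨b⟩ : Nonempty (Module.Basis (Fin d) ℝ ↥P) := ⟨Module.finBasis ℝ ↥P⟩
    -- continuity bound constants for basis elements
    have hMi : ∀ i : Fin d, ∃ M : ℝ, 0 ≤ M ∧ ∀ x ∈ closedBall (0:Rn n) 1,
        ‖((b i : ↥P) : Rn n → V) x‖ ≤ M := by
      intro i
      obtain ⟨M, hM⟩ := (isCompact_closedBall (0:Rn n) 1).exists_bound_of_continuousOn
        ((polySub_contDiff (b i).2).continuous.norm.continuousOn)
      exact ⟨max M 0, le_max_right _ _, fun x hx => by
        have := hM x hx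
        simp only [Real.norm_eq_abs, abs_abs] at this
        calc ‖((b i : ↥P) : Rn n → V) x‖ ≤ M := by
              simpa [abs_of_nonneg (norm_nonneg _)] using this
          _ ≤ max M 0 := le_max_left _ _⟩
    choose M hM0 hMle using hMi
    set L : ℝ := (∑ i, M i) + 1 with hL
    have hL0 : 0 < L := by
      have : 0 ≤ ∑ i, M i := Finset.sum_nonneg fun i _ => hM0 i
      linarith
    -- the polynomial associated to coordinates
    set pc : (Fin d → ℝ) → ↥P := fun c => ∑ i, c i • b i with hpc
    have hpc_apply : ∀ (c : Fin d → ℝ) (y : Rn n),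
        ((pc c : ↥P) : Rn n → V) y = ∑ i, c i • ((b i : ↥P) : Rn n → V) y := by
      intro c y
      have : ((pc c : ↥P) : Rn n → V) = ∑ i, c i • ((b i : ↥P) : Rn n → V) := by
        rw [hpc]
        push_cast
        simp
      rw [this]
      simp
    have hpc_bound : ∀ (c : Fin d → ℝ) (x : Rn n), x ∈ closedBall (0:Rn n) 1 →
        ‖((pc c : ↥P) : Rn n → V) x‖ ≤ ‖c‖ * L := by
      intro c x hx
      rw [hpc_apply]
      calc ‖∑ i, c i • ((b i : ↥P) : Rn n → V) x‖
          ≤ ∑ i, ‖c i • ((b i : ↥P) : Rn n → V) x‖ := norm_sum_le _ _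
        _ ≤ ∑ i, ‖c‖ * M i := by
            refine Finset.sum_le_sum fun i _ => ?_
            rw [norm_smul, Real.norm_eq_abs]
            exact mul_le_mul (by simpa using norm_le_pi_norm c i) (hMle i x hx)
              (norm_nonneg _) (norm_nonneg _)
        _ = ‖c‖ * ∑ i, M i := by rw [← Finset.mul_sum]
        _ ≤ ‖c‖ * L := by
            refine mul_le_mul_of_nonneg_left ?_ (norm_nonneg _)
            rw [hL]; linarith
    have hIntOn' : ∀ c : Fin d → ℝ,
        IntegrableOn (fun y => ‖((pc c : ↥P) : Rn n → V) y‖) A₀ volume :=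
      fun c => hIntOn _ (polySub_contDiff (pc c).2).continuous
    set F : (Fin d → ℝ) → ℝ := fun c => ∫ y in A₀, ‖((pc c : ↥P) : Rn n → V) y‖ with hF
    have hF0 : ∀ c, 0 ≤ F c := fun c => integral_nonneg fun y => norm_nonneg _
    set vA : ℝ := (volume A₀).toReal with hvA
    have hvA0 : 0 ≤ vA := ENNReal.toReal_nonneg
    have hFlip : ∀ c c' : Fin d → ℝ, |F c - F c'| ≤ (vA * L) * ‖c - c'‖ := by
      intro c c'
      have h1 : F c - F c' = ∫ y in A₀,
          (‖((pc c : ↥P) : Rn n → V) y‖ - ‖((pc c' : ↥P) : Rn n → V) y‖) :=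
        (integral_sub (hIntOn' c) (hIntOn' c')).symm
      rw [h1]
      have h2 := norm_integral_le_integral_norm (μ := volume.restrict A₀)
        (fun y => ‖((pc c : ↥P) : Rn n → V) y‖ - ‖((pc c' : ↥P) : Rn n → V) y‖)
      rw [Real.norm_eq_abs] at h2
      refine h2.trans ?_
      have hptw : ∀ y ∈ A₀, ‖(‖((pc c : ↥P) : Rn n → V) y‖ - ‖((pc c' : ↥P) : Rn n → V) y‖)‖
          ≤ ‖c - c'‖ * L := by
        intro y hy
        rw [Real.norm_eq_abs]
        refine (abs_norm_sub_norm_le _ _).trans ?_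
        have hdiff : ((pc c : ↥P) : Rn n → V) y - ((pc c' : ↥P) : Rn n → V) y
            = ((pc (c - c') : ↥P) : Rn n → V) y := by
          rw [hpc_apply, hpc_apply, hpc_apply, ← Finset.sum_sub_distrib]
          congr 1
          funext i
          rw [Pi.sub_apply, sub_smul]
        rw [hdiff]
        exact hpc_bound (c - c') y (hA₀sub hy)
      calc ∫ y in A₀, ‖(‖((pc c : ↥P) : Rn n → V) y‖ - ‖((pc c' : ↥P) : Rn n → V) y‖)‖
          ≤ ∫ y in A₀, (‖c - c'‖ * L) := by
            refine setIntegral_mono_on ?_ ((integrableOn_const_iff).mpr (Or.inr hA₀fin)) hA₀meas hptw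
            exact ((hIntOn' c).sub (hIntOn' c')).norm
        _ = vA * (‖c - c'‖ * L) := by rw [setIntegral_const, smul_eq_mul]; rfl
        _ = (vA * L) * ‖c - c'‖ := by ring
    have hFcont : Continuous F := by
      refine (LipschitzWith.of_dist_le_mul (K := (vA * L).toNNReal) ?_).continuous
      intro c c'
      rw [Real.dist_eq, dist_eq_norm, Real.coe_toNNReal _ (by positivity)]
      exact hFlip c c'
    have hFsmul : ∀ (t : ℝ) (c : Fin d → ℝ), F (t • c) = |t| * F c := by
      intro t c
      have hts : pc (t • c) = t • pc c := by
        simp only [hpc, Finset.smul_sum, Pi.smul_apply, smul_eq_mul, mul_smul]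
      simp only [hF, hts]
      have : ∀ y, ‖((t • pc c : ↥P) : Rn n → V) y‖ = |t| * ‖((pc c : ↥P) : Rn n → V) y‖ := by
        intro y
        have : ((t • pc c : ↥P) : Rn n → V) y = t • ((pc c : ↥P) : Rn n → V) y := rfl
        rw [this, norm_smul, Real.norm_eq_abs]
      simp only [this]
      exact integral_const_mul |t| _
    have hFpos : ∀ c : Fin d → ℝ, c ≠ 0 → 0 < F c := by
      intro c hcne
      rcases lt_or_eq_of_le (hF0 c) with h | h
      · exact h
      exfalso
      have hcp := (polySub_contDiff (pc c).2).continuous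
      have hae : (fun y => ‖((pc c : ↥P) : Rn n → V) y‖) =ᵐ[volume.restrict A₀] 0 :=
        (integral_eq_zero_iff_of_nonneg (fun y => norm_nonneg _) (hIntOn' c)).mp h.symm
      have hSopen : IsOpen {y : Rn n | ((pc c : ↥P) : Rn n → V) y ≠ 0} :=
        isOpen_ne_fun hcp continuous_const
      have h1 : volume.restrict A₀ {y : Rn n | ((pc c : ↥P) : Rn n → V) y ≠ 0} = 0 := by
        have h2 := ae_iff.mp hae
        simpa [norm_ne_zero_iff] using h2
      have hmz : volume ({y : Rn n | ((pc c : ↥P) : Rn n → V) y ≠ 0} ∩ A₀) = 0 := by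
        rw [← Measure.restrict_apply hSopen.measurableSet]
        exact h1
      have hempty : {y : Rn n | ((pc c : ↥P) : Rn n → V) y ≠ 0} ∩ A₀ = ∅ :=
        (hSopen.inter hA₀open).eq_empty_of_measure_zero hmz
      have hzero : ∀ y ∈ A₀, ((pc c : ↥P) : Rn n → V) y = 0 := by
        intro y hy
        by_contra hne
        have hymem : y ∈ ({y : Rn n | ((pc c : ↥P) : Rn n → V) y ≠ 0} ∩ A₀) := ⟨hne, hy⟩
        rw [hempty] at hymem
        exact hymem
      obtain ⟨y₀, hy₀⟩ := hA₀ne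
      have hall := polySub_rigid (pc c).2 hA₀open hy₀ hzero
      have hpc0 : pc c = 0 := Subtype.ext (funext hall)
      have hc0 : ∀ i, c i = 0 := by
        have hli := Fintype.linearIndependent_iff.mp b.linearIndependent c
        exact hli hpc0
      exact hcne (funext hc0)
    obtain ⟨c₀, hc₀S, hmin⟩ := (isCompact_sphere (0 : Fin d → ℝ) 1).exists_isMinOn
      (NormedSpace.sphere_nonempty.mpr zero_le_one) hFcont.continuousOn
    have hc₀ne : c₀ ≠ 0 := by
      intro h0
      rw [h0, mem_sphere_zero_iff_norm, norm_zero] at hc₀S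
      norm_num at hc₀S
    have hδ0 : 0 < F c₀ := hFpos c₀ hc₀ne
    set δ : ℝ := F c₀ with hδ
    have hFlow : ∀ c' : Fin d → ℝ, δ * ‖c'‖ ≤ F c' := by
      intro c'
      rcases eq_or_ne c' 0 with rfl | hne
      · rw [norm_zero, mul_zero]
        exact hF0 0
      · have hunit : (‖c'‖⁻¹ • c') ∈ sphere (0 : Fin d → ℝ) 1 := by
          rw [mem_sphere_zero_iff_norm, norm_smul, norm_inv, norm_norm,
            inv_mul_cancel₀ (norm_ne_zero_iff.mpr hne)]
        have h1 : δ ≤ F (‖c'‖⁻¹ • c') := hmin hunit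
        rw [hFsmul, abs_inv, abs_norm] at h1
        have h2 : δ * ‖c'‖ ≤ (‖c'‖⁻¹ * F c') * ‖c'‖ :=
          mul_le_mul_of_nonneg_right h1 (norm_nonneg _)
        calc δ * ‖c'‖ ≤ (‖c'‖⁻¹ * F c') * ‖c'‖ := h2
          _ = F c' := by
              rw [mul_comm (‖c'‖⁻¹) (F c'), mul_assoc,
                inv_mul_cancel₀ (norm_ne_zero_iff.mpr hne), mul_one]
    refine ⟨L / δ, by positivity, ?_⟩
    intro p hp x hx
    set c : Fin d → ℝ := fun i => b.repr ⟨p, hp⟩ i with hc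
    have hpcc : pc c = ⟨p, hp⟩ := by
      rw [hpc]
      exact b.sum_repr ⟨p, hp⟩
    have h3 : ‖p x‖ ≤ ‖c‖ * L := by
      have := hpc_bound c x hx
      rw [hpcc] at this
      exact this
    have h4 : δ * ‖c‖ ≤ F c := hFlow c
    have h5 : F c = ∫ y in A₀, ‖p y‖ := by
      simp only [hF, hpcc]
    calc ‖p x‖ ≤ ‖c‖ * L := h3
      _ ≤ (F c / δ) * L := by
          have hcd : ‖c‖ ≤ F c / δ := (le_div_iff₀ hδ0).mpr (by linarith)
          exact mul_le_mul_of_nonneg_right hcd hL0.le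
      _ = L / δ * F c := by ring
      _ = L / δ * ∫ y in A₀, ‖p y‖ := by rw [h5]

end UnitEst

section Main
variable {n m : ℕ} {V : Type*} [NormedAddCommGroup V] [InnerProductSpace ℝ V]
  [FiniteDimensional ℝ V]

theorem scaled_est (hn : 0 < n) (m : ℕ) :
    ∃ C : ℝ, 0 < C ∧ ∀ (x₀ : Rn n) (r : ℝ), 0 < r →
      ∀ p ∈ polySub n m V, ∀ x ∈ ball x₀ r,
        ‖p x‖ * (volume (ball x₀ r)).toReal
          ≤ C * ∫ y in ball x₀ r \ closedBall x₀ (r/2), ‖p y‖ := by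
  obtain ⟨C₀, hC₀, hunit⟩ := unit_est (V := V) hn m
  set v₁ : ℝ := (volume (ball (0:Rn n) 1)).toReal with hv₁def
  have hv₁ : 0 < v₁ := by
    rw [hv₁def]
    exact ENNReal.toReal_pos (isOpen_ball.measure_ne_zero volume ⟨0, mem_ball_self one_pos⟩)
      measure_ball_lt_top.ne
  refine ⟨C₀ * v₁, by positivity, ?_⟩
  intro x₀ r hr p hp x hx
  have hrn : (0:ℝ) < r ^ n := by positivity
  set q : Rn n → V := fun y => p (x₀ + r • y) with hqdef
  have hq : q ∈ polySub n m V := polySub_comp_affine hp x₀ r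
  set y : Rn n := r⁻¹ • (x - x₀) with hydef
  have hxy : x₀ + r • y = x := by
    rw [hydef, smul_smul, mul_inv_cancel₀ hr.ne', one_smul]
    abel
  have hy1 : y ∈ closedBall (0:Rn n) 1 := by
    rw [mem_closedBall, dist_zero_right, hydef, norm_smul, norm_inv, Real.norm_eq_abs,
      abs_of_pos hr]
    rw [mem_ball, dist_eq_norm] at hx
    rw [inv_mul_le_iff₀ hr, mul_one]
    exact hx.le
  have hAmeas : MeasurableSet (ball x₀ r \ closedBall x₀ (r/2)) :=
    measurableSet_ball.diff measurableSet_closedBall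
  have hpre : (fun y : Rn n => x₀ + r • y) ⁻¹' (ball x₀ r \ closedBall x₀ (r/2))
      = ball (0:Rn n) 1 \ closedBall (0:Rn n) (1/2) := by
    rw [Set.preimage_diff]
    have e1 : ball x₀ r = ball x₀ (1 * r) := by rw [one_mul]
    have e2 : closedBall x₀ (r/2) = closedBall x₀ ((1/2) * r) := by
      congr 1
      ring
    rw [e1, e2, pre_ball x₀ hr 1, pre_cball x₀ hr (1/2)]
  have hcv : ∫ z in ball x₀ r \ closedBall x₀ (r/2), ‖p z‖
      = r ^ n * ∫ w in ball (0:Rn n) 1 \ closedBall (0:Rn n) (1/2), ‖q w‖ := by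
    rw [setIntegral_scale x₀ hr (fun z => ‖p z‖) hAmeas, hpre]
  have hvol : (volume (ball x₀ r)).toReal = r ^ n * v₁ := by
    have h1 : ∫ _z in ball x₀ r, (1:ℝ)
        = r ^ n * ∫ _w in (fun y : Rn n => x₀ + r • y) ⁻¹' (ball x₀ r), (1:ℝ) :=
      setIntegral_scale x₀ hr (fun _ => (1:ℝ)) measurableSet_ball
    have e1 : ball x₀ r = ball x₀ (1 * r) := by rw [one_mul]
    rw [e1, pre_ball x₀ hr 1] at h1
    rw [setIntegral_const, setIntegral_const, smul_eq_mul, smul_eq_mul, mul_one, mul_one]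
      at h1
    rw [← e1] at h1
    exact h1
  have hq_est : ‖q y‖ ≤ C₀ * ∫ w in ball (0:Rn n) 1 \ closedBall (0:Rn n) (1/2), ‖q w‖ :=
    hunit q hq y hy1
  have hqx : ‖p x‖ = ‖q y‖ := by rw [hqdef]; simp only [hxy]
  have hint_nonneg : (0:ℝ) ≤ ∫ w in ball (0:Rn n) 1 \ closedBall (0:Rn n) (1/2), ‖q w‖ :=
    integral_nonneg fun w => norm_nonneg _
  calc ‖p x‖ * (volume (ball x₀ r)).toReal = ‖q y‖ * (r ^ n * v₁) := by
        rw [hqx, hvol]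
    _ ≤ (C₀ * ∫ w in ball (0:Rn n) 1 \ closedBall (0:Rn n) (1/2), ‖q w‖) * (r ^ n * v₁) :=
        mul_le_mul_of_nonneg_right hq_est (by positivity)
    _ = (C₀ * v₁) * (r ^ n * ∫ w in ball (0:Rn n) 1 \ closedBall (0:Rn n) (1/2), ‖q w‖) := by
        ring
    _ = (C₀ * v₁) * ∫ z in ball x₀ r \ closedBall x₀ (r/2), ‖p z‖ := by rw [hcv]


theorem annulus_nonempty (hn : 0 < n) {x₀ : Rn n} {r : ℝ} (hr : 0 < r) :
    (ball x₀ r \ closedBall x₀ (r/2)).Nonempty := by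
  refine ⟨x₀ + ((3/4 : ℝ) * r) • EuclideanSpace.single (⟨0, hn⟩ : Fin n) (1:ℝ), ?_, ?_⟩
  · rw [mem_ball, dist_eq_norm, add_sub_cancel_left, norm_smul, EuclideanSpace.norm_single]
    rw [Real.norm_eq_abs, abs_of_pos (by positivity), norm_one, mul_one]
    linarith
  · rw [mem_closedBall, dist_eq_norm, add_sub_cancel_left, norm_smul,
      EuclideanSpace.norm_single]
    rw [Real.norm_eq_abs, abs_of_pos (by positivity), norm_one, mul_one]
    push_neg
    linarith

theorem integrableOn_cont {U : Set (Rn n)} {x₀ : Rn n} {r : ℝ}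
    (hUsub : U ⊆ closedBall x₀ r) {g : Rn n → ℝ} (hg : Continuous g) :
    IntegrableOn g U volume :=
  (hg.continuousOn.integrableOn_compact (isCompact_closedBall x₀ r)).mono_set hUsub

theorem integrableOn_inner' {U : Set (Rn n)} {x₀ : Rn n} {r : ℝ}
    (hUsub : U ⊆ closedBall x₀ r) (hUmeas : MeasurableSet U)
    {u p : Rn n → V} (hu : IntegrableOn u U volume) (hp : Continuous p) :
    IntegrableOn (fun x => (inner ℝ (u x) (p x) : ℝ)) U volume := by
  obtain ⟨Mb, hMb⟩ := (isCompact_closedBall x₀ r).exists_bound_of_continuousOn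
    hp.continuousOn
  refine Integrable.mono' (hu.norm.const_mul Mb) ?_ ?_
  · exact AEStronglyMeasurable.inner hu.aestronglyMeasurable
      hp.aestronglyMeasurable.restrict
  · refine (ae_restrict_iff' hUmeas).mpr (Filter.Eventually.of_forall fun x hx => ?_)
    calc ‖(inner ℝ (u x) (p x) : ℝ)‖ ≤ ‖u x‖ * ‖p x‖ := norm_inner_le_norm _ _
      _ ≤ Mb * ‖u x‖ := by
          rw [mul_comm]
          exact mul_le_mul_of_nonneg_right (hMb x (hUsub hx)) (norm_nonneg _)

theorem master {x₀ : Rn n} {r : ℝ} (hr : 0 < r)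
    {C : ℝ} (hC : 0 < C)
    (hest : ∀ p ∈ polySub n m V, ∀ x ∈ ball x₀ r,
      ‖p x‖ * (volume (ball x₀ r)).toReal
        ≤ C * ∫ y in ball x₀ r \ closedBall x₀ (r/2), ‖p y‖)
    {U : Set (Rn n)} (hUopen : IsOpen U) (hUne : U.Nonempty)
    (hUsub : U ⊆ ball x₀ r)
    (hAsub : ball x₀ r \ closedBall x₀ (r/2) ⊆ U)
    {u : Rn n → V} (hu : IntegrableOn u U volume)
    {p : Rn n → V} (hp : p ∈ polySub n m V)
    (horth : ∫ x in U, (inner ℝ (u x - p x) (p x) : ℝ) = 0) :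
    ⨍ x in U, ‖p x‖ ≤ C * ⨍ x in U, ‖u x‖ := by
  have hUmeas : MeasurableSet U := hUopen.measurableSet
  have hUsub' : U ⊆ closedBall x₀ r := hUsub.trans ball_subset_closedBall
  have hpc : Continuous p := (polySub_contDiff hp).continuous
  set vB : ℝ := (volume (ball x₀ r)).toReal with hvB
  set μU : ℝ := (volume U).toReal with hμU
  have hμU0 : 0 < μU := by
    rw [hμU]
    exact ENNReal.toReal_pos (hUopen.measure_ne_zero volume hUne)
      (((measure_mono hUsub').trans_lt measure_closedBall_lt_top).ne)
  have hμUvB : μU ≤ vB := by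
    apply ENNReal.toReal_mono
    · exact ((measure_mono ball_subset_closedBall).trans_lt measure_closedBall_lt_top).ne
    · exact measure_mono hUsub
  have hvB0 : 0 < vB := lt_of_lt_of_le hμU0 hμUvB
  set a : ℝ := ∫ x in U, ‖p x‖ with ha
  set t : ℝ := ∫ x in U, ‖u x‖ with ht
  have ha0 : 0 ≤ a := integral_nonneg fun x => norm_nonneg _
  have ht0 : 0 ≤ t := integral_nonneg fun x => norm_nonneg _
  have hIntp : IntegrableOn (fun x => ‖p x‖) U volume := integrableOn_cont hUsub' hpc.norm
  have hIntp2 : IntegrableOn (fun x => ‖p x‖^2) U volume :=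
    integrableOn_cont hUsub' (hpc.norm.pow 2)
  have hIntup : IntegrableOn (fun x => (inner ℝ (u x) (p x) : ℝ)) U volume :=
    integrableOn_inner' hUsub' hUmeas hu hpc
  have hIntpp : IntegrableOn (fun x => (inner ℝ (p x) (p x) : ℝ)) U volume := by
    refine integrableOn_cont hUsub' ?_
    exact (hpc.inner hpc)
  -- pointwise sup bound on U
  have hsup : ∀ x ∈ U, ‖p x‖ ≤ C * a / vB := by
    intro x hx
    rw [le_div_iff₀ hvB0]
    refine (hest p hp x (hUsub hx)).trans ?_
    refine mul_le_mul_of_nonneg_left ?_ hC.le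
    refine setIntegral_mono_set hIntp ?_ (HasSubset.Subset.eventuallyLE hAsub)
    exact Filter.Eventually.of_forall fun x => norm_nonneg _
  -- orthogonality: ∫ ‖p‖² = ∫ ⟨u,p⟩
  have horth2 : ∫ x in U, ‖p x‖^2 = ∫ x in U, (inner ℝ (u x) (p x) : ℝ) := by
    have hsplit : ∫ x in U, (inner ℝ (u x - p x) (p x) : ℝ)
        = (∫ x in U, (inner ℝ (u x) (p x) : ℝ)) - ∫ x in U, (inner ℝ (p x) (p x) : ℝ) := by
      rw [← integral_sub hIntup hIntpp]
      congr 1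
      funext x
      rw [inner_sub_left]
    have hppnorm : ∫ x in U, (inner ℝ (p x) (p x) : ℝ) = ∫ x in U, ‖p x‖^2 := by
      congr 1
      funext x
      exact real_inner_self_eq_norm_sq _
    rw [hsplit, hppnorm] at horth
    linarith [horth]
  -- bound ∫ ⟨u,p⟩
  have hbound : ∫ x in U, (inner ℝ (u x) (p x) : ℝ) ≤ (C * a / vB) * t := by
    have h1 : ∫ x in U, (inner ℝ (u x) (p x) : ℝ) ≤ ∫ x in U, (C * a / vB) * ‖u x‖ := by
      refine setIntegral_mono_on hIntup ((hu.norm).const_mul _) hUmeas ?_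
      intro x hx
      calc (inner ℝ (u x) (p x) : ℝ) ≤ ‖u x‖ * ‖p x‖ := real_inner_le_norm _ _
        _ ≤ ‖u x‖ * (C * a / vB) := by
            refine mul_le_mul_of_nonneg_left (hsup x hx) (norm_nonneg _)
        _ = (C * a / vB) * ‖u x‖ := mul_comm _ _
    rw [integral_const_mul] at h1
    exact h1
  -- Cauchy-Schwarz: a^2 ≤ μU * ∫ ‖p‖²
  have hCS : a^2 ≤ μU * ∫ x in U, ‖p x‖^2 := by
    set c : ℝ := a/μU with hc
    have hca : c * μU = a := by
      rw [hc]; field_simp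
    have hcint : IntegrableOn (fun _ : Rn n => c^2) U volume :=
      (integrableOn_const_iff).mpr (Or.inr ((measure_mono hUsub').trans_lt
        measure_closedBall_lt_top))
    have hnn : 0 ≤ ∫ x in U, (‖p x‖ - c)^2 := integral_nonneg fun x => sq_nonneg _
    have i1 : ∫ x in U, (‖p x‖ - c)^2 = ∫ x in U, (‖p x‖^2 - 2*c*‖p x‖ + c^2) := by
      congr 1
      funext x
      ring
    have i2 : ∫ x in U, (‖p x‖^2 - 2*c*‖p x‖ + c^2)
        = (∫ x in U, (‖p x‖^2 - 2*c*‖p x‖)) + ∫ _x in U, c^2 :=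
      integral_add (hIntp2.sub (hIntp.const_mul (2*c))) hcint
    have i3 : ∫ x in U, (‖p x‖^2 - 2*c*‖p x‖)
        = (∫ x in U, ‖p x‖^2) - ∫ x in U, 2*c*‖p x‖ :=
      integral_sub hIntp2 (hIntp.const_mul (2*c))
    have i4 : ∫ x in U, 2*c*‖p x‖ = 2*c*a := by
      rw [integral_const_mul, ← ha]
    have i5 : ∫ _x in U, (c^2 : ℝ) = c^2 * μU := by
      rw [setIntegral_const, smul_eq_mul, measureReal_def, ← hμU, mul_comm]
    have hlow : 0 ≤ (∫ x in U, ‖p x‖^2) - 2*c*a + c^2 * μU := by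
      rw [i1, i2, i3, i4, i5] at hnn
      linarith
    nlinarith [mul_le_mul_of_nonneg_left hlow hμU0.le, hca, sq_nonneg a]
  -- combine
  have hfinal : a ≤ C * t := by
    rcases eq_or_lt_of_le ha0 with h0 | hapos
    · rw [← h0]; positivity
    have hchain : a^2 ≤ μU * ((C * a / vB) * t) := by
      calc a^2 ≤ μU * ∫ x in U, ‖p x‖^2 := hCS
        _ ≤ μU * ((C * a / vB) * t) := by
            refine mul_le_mul_of_nonneg_left ?_ hμU0.le
            calc ∫ x in U, ‖p x‖^2 = ∫ x in U, (inner ℝ (u x) (p x) : ℝ) := horth2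
              _ ≤ (C * a / vB) * t := hbound
    have h5 : a^2 ≤ C * a * t := by
      have h6 : μU * ((C * a / vB) * t) ≤ C * a * t := by
        rw [div_mul_eq_mul_div, mul_div_assoc']
        rw [div_le_iff₀ hvB0]
        calc μU * (C * a * t) ≤ vB * (C * a * t) := by
              refine mul_le_mul_of_nonneg_right hμUvB (by positivity)
          _ = C * a * t * vB := mul_comm _ _
      exact hchain.trans h6
    nlinarith [h5, hapos]
  rw [setAverage_eq, setAverage_eq, smul_eq_mul, smul_eq_mul, measureReal_def, ← hμU, ← ha, ← ht]
  calc μU⁻¹ * a ≤ μU⁻¹ * (C * t) := by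
        exact mul_le_mul_of_nonneg_left hfinal (by positivity)
    _ = C * (μU⁻¹ * t) := by ring


theorem proj_exists {N : Submodule ℝ (Rn n → V)} (hNP : N ≤ polySub n m V)
    {U : Set (Rn n)} {x₀ : Rn n} {r : ℝ} (hUopen : IsOpen U) (hUne : U.Nonempty)
    (hUsub : U ⊆ closedBall x₀ r)
    {u : Rn n → V} (hu : IntegrableOn u U volume) :
    ∃ p ∈ N, ∀ q ∈ N, ∫ x in U, (inner ℝ (u x - p x) (q x) : ℝ) = 0 := by
  classical
  have hUmeas : MeasurableSet U := hUopen.measurableSet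
  haveI : FiniteDimensional ℝ (polySub n m V) := polySub_findim
  haveI : FiniteDimensional ℝ ↥N := Submodule.finiteDimensional_of_le hNP
  have hcont : ∀ p : ↥N, Continuous ((p : Rn n → V)) :=
    fun p => (polySub_contDiff (hNP p.2)).continuous
  have hInt2 : ∀ p q : ↥N,
      IntegrableOn (fun x => (inner ℝ ((p:Rn n → V) x) ((q:Rn n → V) x) : ℝ)) U volume :=
    fun p q => integrableOn_cont hUsub ((hcont p).inner (hcont q))
  have hIntu : ∀ q : ↥N,
      IntegrableOn (fun x => (inner ℝ (u x) ((q:Rn n → V) x) : ℝ)) U volume :=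
    fun q => integrableOn_inner' hUsub hUmeas hu (hcont q)
  have hadd_l : ∀ p p' q : ↥N,
      ∫ x in U, (inner ℝ (((p + p' : ↥N) : Rn n → V) x) ((q : Rn n → V) x) : ℝ)
        = (∫ x in U, (inner ℝ ((p : Rn n → V) x) ((q : Rn n → V) x) : ℝ))
          + ∫ x in U, (inner ℝ ((p' : Rn n → V) x) ((q : Rn n → V) x) : ℝ) := by
    intro p p' q
    rw [← integral_add (hInt2 p q) (hInt2 p' q)]
    congr 1
    funext x
    rw [← inner_add_left]
    rfl
  have hsmul_l : ∀ (c : ℝ) (p q : ↥N),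
      ∫ x in U, (inner ℝ (((c • p : ↥N) : Rn n → V) x) ((q : Rn n → V) x) : ℝ)
        = c • ∫ x in U, (inner ℝ ((p : Rn n → V) x) ((q : Rn n → V) x) : ℝ) := by
    intro c p q
    rw [smul_eq_mul, ← integral_const_mul]
    congr 1
    funext x
    rw [← real_inner_smul_left]
    rfl
  have hadd_r : ∀ p q q' : ↥N,
      ∫ x in U, (inner ℝ ((p : Rn n → V) x) (((q + q' : ↥N) : Rn n → V) x) : ℝ)
        = (∫ x in U, (inner ℝ ((p : Rn n → V) x) ((q : Rn n → V) x) : ℝ))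
          + ∫ x in U, (inner ℝ ((p : Rn n → V) x) ((q' : Rn n → V) x) : ℝ) := by
    intro p q q'
    rw [← integral_add (hInt2 p q) (hInt2 p q')]
    congr 1
    funext x
    rw [← inner_add_right]
    rfl
  have hsmul_r : ∀ (c : ℝ) (p q : ↥N),
      ∫ x in U, (inner ℝ ((p : Rn n → V) x) (((c • q : ↥N) : Rn n → V) x) : ℝ)
        = c • ∫ x in U, (inner ℝ ((p : Rn n → V) x) ((q : Rn n → V) x) : ℝ) := by
    intro c p q
    rw [smul_eq_mul, ← integral_const_mul]
    congr 1
    funext x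
    rw [← real_inner_smul_right]
    rfl
  set Φ : ↥N →ₗ[ℝ] Module.Dual ℝ ↥N :=
    LinearMap.mk₂ ℝ (fun p q => ∫ x in U, (inner ℝ ((p:Rn n → V) x) ((q:Rn n → V) x) : ℝ))
      (fun p p' q => hadd_l p p' q)
      (fun c p q => hsmul_l c p q)
      (fun p q q' => hadd_r p q q')
      (fun c p q => hsmul_r c p q) with hΦ
  have hΦapp : ∀ p q : ↥N,
      Φ p q = ∫ x in U, (inner ℝ ((p:Rn n → V) x) ((q:Rn n → V) x) : ℝ) := by
    intro p q
    rw [hΦ]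
    rfl
  have hΦinj : Function.Injective Φ := by
    rw [injective_iff_map_eq_zero]
    intro p hp0
    have h1 : ∫ x in U, (inner ℝ ((p:Rn n → V) x) ((p:Rn n → V) x) : ℝ) = 0 := by
      rw [← hΦapp p p, hp0]
      rfl
    have h2 : ∫ x in U, ‖(p:Rn n → V) x‖^2 = 0 := by
      rw [← h1]
      congr 1
      funext x
      exact (real_inner_self_eq_norm_sq _).symm
    have hir : IntegrableOn (fun x => ‖(p:Rn n → V) x‖^2) U volume :=
      integrableOn_cont hUsub ((hcont p).norm.pow 2)
    have hae : (fun x => ‖(p:Rn n → V) x‖^2) =ᵐ[volume.restrict U] 0 :=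
      (integral_eq_zero_iff_of_nonneg (fun x => sq_nonneg _) hir).mp h2
    have hSopen : IsOpen {x : Rn n | (p:Rn n → V) x ≠ 0} :=
      isOpen_ne_fun (hcont p) continuous_const
    have h3 : volume.restrict U {x : Rn n | (p:Rn n → V) x ≠ 0} = 0 := by
      have h4 := ae_iff.mp hae
      simpa [pow_eq_zero_iff, norm_eq_zero] using h4
    have hmz : volume ({x : Rn n | (p:Rn n → V) x ≠ 0} ∩ U) = 0 := by
      rw [← Measure.restrict_apply hSopen.measurableSet]
      exact h3
    have hempty : {x : Rn n | (p:Rn n → V) x ≠ 0} ∩ U = ∅ :=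
      (hSopen.inter hUopen).eq_empty_of_measure_zero hmz
    have hzero : ∀ x ∈ U, (p:Rn n → V) x = 0 := by
      intro x hx
      by_contra hne
      have : x ∈ ({x : Rn n | (p:Rn n → V) x ≠ 0} ∩ U) := ⟨hne, hx⟩
      rw [hempty] at this
      exact this
    obtain ⟨y₀, hy₀⟩ := hUne
    exact Subtype.ext (funext (polySub_rigid (hNP p.2) hUopen hy₀ hzero))
  have hΦsurj : Function.Surjective Φ :=
    (LinearMap.injective_iff_surjective_of_finrank_eq_finrank
      (Subspace.dual_finrank_eq).symm).mp hΦinj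
  have hℓadd : ∀ q q' : ↥N,
      ∫ x in U, (inner ℝ (u x) (((q + q' : ↥N) : Rn n → V) x) : ℝ)
        = (∫ x in U, (inner ℝ (u x) ((q : Rn n → V) x) : ℝ))
          + ∫ x in U, (inner ℝ (u x) ((q' : Rn n → V) x) : ℝ) := by
    intro q q'
    rw [← integral_add (hIntu q) (hIntu q')]
    congr 1
    funext x
    rw [← inner_add_right]
    rfl
  have hℓsmul : ∀ (c : ℝ) (q : ↥N),
      ∫ x in U, (inner ℝ (u x) (((c • q : ↥N) : Rn n → V) x) : ℝ)
        = c • ∫ x in U, (inner ℝ (u x) ((q : Rn n → V) x) : ℝ) := by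
    intro c q
    rw [smul_eq_mul, ← integral_const_mul]
    congr 1
    funext x
    rw [← real_inner_smul_right]
    rfl
  set ℓ : Module.Dual ℝ ↥N :=
    { toFun := fun q => ∫ x in U, (inner ℝ (u x) ((q:Rn n → V) x) : ℝ)
      map_add' := fun q q' => hℓadd q q'
      map_smul' := fun c q => hℓsmul c q } with hℓ
  obtain ⟨pN, hpN⟩ := hΦsurj ℓ
  refine ⟨↑pN, pN.2, fun q hq => ?_⟩
  have h1 : ∫ x in U, (inner ℝ ((pN : Rn n → V) x) (q x) : ℝ)
      = ∫ x in U, (inner ℝ (u x) (q x) : ℝ) := by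
    have h0 : Φ pN ⟨q, hq⟩ = ℓ ⟨q, hq⟩ := by rw [hpN]
    rw [hΦapp pN ⟨q, hq⟩] at h0
    exact h0
  have h2 : ∫ x in U, (inner ℝ (u x - (pN : Rn n → V) x) (q x) : ℝ)
      = (∫ x in U, (inner ℝ (u x) (q x) : ℝ))
        - ∫ x in U, (inner ℝ ((pN : Rn n → V) x) (q x) : ℝ) := by
    rw [← integral_sub (hIntu ⟨q, hq⟩) (hInt2 pN ⟨q, hq⟩)]
    congr 1
    funext x
    rw [inner_sub_left]
  rw [h2, h1, sub_self]

end Main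

end PolyProjAux

section Theorems

variable {n k : ℕ} {V W : Type*}
  [NormedAddCommGroup V] [InnerProductSpace ℝ V] [FiniteDimensional ℝ V]
  [NormedAddCommGroup W] [InnerProductSpace ℝ W] [FiniteDimensional ℝ W]

theorem l1_stability_of_polynomial_projection
    (hn : 2 ≤ n) (m : ℕ)
    (N : Submodule ℝ (Rn n → V)) (hN : ∀ p ∈ N, PolyDeg m p) :
    ∃ c : ℝ, 0 < c ∧
      ∀ (x₀ : Rn n) (r : ℝ), 0 < r → ∀ lam ∈ Set.Icc (0 : ℝ) (1 / 2),
        ∀ U ∈ ({ball x₀ r, ball x₀ r \ closedBall x₀ (lam * r)} : Set (Set (Rn n))),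
          ∀ u : Rn n → V, IntegrableOn u U volume →
            (∃ p ∈ N, ∀ q ∈ N, ∫ x in U, (inner ℝ (u x - p x) (q x) : ℝ) = 0) ∧
            ∀ p ∈ N, (∀ q ∈ N, ∫ x in U, (inner ℝ (u x - p x) (q x) : ℝ) = 0) →
              ⨍ x in U, ‖p x‖ ≤ c * ⨍ x in U, ‖u x‖ := by
  classical
  have hn0 : 0 < n := by omega
  have hNP : N ≤ PolyProjAux.polySub n m V := fun p hp => hN p hp
  obtain ⟨C, hC, hest⟩ := PolyProjAux.scaled_est (V := V) (n := n) hn0 m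
  refine ⟨C, hC, ?_⟩
  intro x₀ r hr lam hlam U hU u hu
  have hlr : lam * r ≤ r / 2 := by nlinarith [hlam.1, hlam.2, hr.le]
  have hAsub : (ball x₀ r \ closedBall x₀ (r/2)) ⊆ U := by
    rcases hU with rfl | hU'
    · exact Set.diff_subset
    · rw [Set.mem_singleton_iff] at hU'
      subst hU'
      intro x hx
      exact ⟨hx.1, fun hc => hx.2 (closedBall_subset_closedBall hlr hc)⟩
  have hUopen : IsOpen U := by
    rcases hU with rfl | hU'
    · exact isOpen_ball
    · rw [Set.mem_singleton_iff] at hU'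
      subst hU'
      exact isOpen_ball.sdiff isClosed_closedBall
  have hUsub : U ⊆ ball x₀ r := by
    rcases hU with rfl | hU'
    · exact subset_rfl
    · rw [Set.mem_singleton_iff] at hU'
      subst hU'
      exact Set.diff_subset
  have hUne : U.Nonempty := by
    obtain ⟨z, hz⟩ := PolyProjAux.annulus_nonempty hn0 (x₀ := x₀) hr
    exact ⟨z, hAsub hz⟩
  constructor
  · exact PolyProjAux.proj_exists hNP hUopen hUne
      (hUsub.trans ball_subset_closedBall) hu
  · intro p hp horthall
    exact PolyProjAux.master hr hC (hest x₀ r hr) hUopen hUne hUsub hAsub hu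
      (hNP hp) (horthall p hp)


end Theorems
end
end

section
/- Let m ∈ ℕ₀ and n ≥ 1. Then there exists a constant c = c(m,n) > 0 such that for every ball B ⊂ ℝⁿ with center x₀, every λ ∈ (0,1], and every V-valued polynomial q on ℝⁿ of degree at most m with q(x₀) = 0, one has ⨍_{λB} |q(x)| dx ≤ c λ ⨍_B |q(x)| dx, where λB denotes the concentric ball scaled by the factor λ. -/
open MeasureTheory Metric Filter Topology Bornology
open scoped ENNReal NNReal

noncomputable section

section Aux
variable {n : ℕ}

lemma polyDeg_succ_iff {V : Type*} [NormedAddCommGroup V] [NormedSpace ℝ V] {m : ℕ}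
    {q : Rn n → V} :
    PolyDeg (m+1) q ↔ ContDiff ℝ (⊤ : ℕ∞) q ∧ PolyDeg m (fderiv ℝ q) := by
  constructor
  · rintro ⟨hc, hd⟩
    refine ⟨hc, hc.fderiv_right (by simp), fun x => ?_⟩
    rw [← norm_eq_zero, norm_iteratedFDeriv_fderiv, norm_eq_zero]
    exact hd x
  · rintro ⟨hc, _, hd⟩
    refine ⟨hc, fun x => ?_⟩
    rw [← norm_eq_zero, ← norm_iteratedFDeriv_fderiv, norm_eq_zero]
    exact hd x

lemma polyDeg_zero_iff {V : Type*} [NormedAddCommGroup V] [NormedSpace ℝ V]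
    {q : Rn n → V} :
    PolyDeg 0 q ↔ ContDiff ℝ (⊤ : ℕ∞) q ∧ ∀ x, fderiv ℝ q x = 0 := by
  have key : ∀ x, ‖fderiv ℝ q x‖ = ‖iteratedFDeriv ℝ 1 q x‖ := by
    intro x
    rw [← norm_iteratedFDeriv_fderiv (n := 0), norm_iteratedFDeriv_zero]
  constructor
  · rintro ⟨hc, hd⟩
    refine ⟨hc, fun x => ?_⟩
    rw [← norm_eq_zero, key, norm_eq_zero]
    exact hd x
  · rintro ⟨hc, hd⟩
    refine ⟨hc, fun x => ?_⟩
    rw [← norm_eq_zero, ← key, norm_eq_zero]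
    exact hd x

lemma polyDeg_const {V : Type*} [NormedAddCommGroup V] [NormedSpace ℝ V] (m : ℕ) (v : V) :
    PolyDeg (n := n) m (fun _ => v) := by
  refine ⟨contDiff_const, fun x => ?_⟩
  rw [iteratedFDeriv_const_of_ne (Nat.succ_ne_zero m) v]
  rfl

lemma polyDeg_smul {V : Type*} [NormedAddCommGroup V] [NormedSpace ℝ V] {m : ℕ}
    {f : Rn n → V} (c : ℝ) (h : PolyDeg m f) : PolyDeg m (fun x => c • f x) := by
  refine ⟨h.1.const_smul c, fun x => ?_⟩
  have : (fun x => c • f x) = c • f := rfl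
  rw [this, iteratedFDeriv_const_smul_apply (h.1.of_le (by exact_mod_cast le_top)).contDiffAt, h.2 x, smul_zero]

lemma polyDeg_add {V : Type*} [NormedAddCommGroup V] [NormedSpace ℝ V] {m : ℕ}
    {f g : Rn n → V} (hf : PolyDeg m f) (hg : PolyDeg m g) :
    PolyDeg m (fun x => f x + g x) := by
  refine ⟨hf.1.add hg.1, fun x => ?_⟩
  have : (fun x => f x + g x) = f + g := rfl
  rw [this, iteratedFDeriv_add_apply (hf.1.of_le (by exact_mod_cast le_top)).contDiffAt (hg.1.of_le (by exact_mod_cast le_top)).contDiffAt, hf.2 x, hg.2 x, zero_add]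

/-- The space of `V`-valued polynomials of degree at most `m`, as a submodule. -/
def polySub (n m : ℕ) (V : Type*) [NormedAddCommGroup V] [NormedSpace ℝ V] :
    Submodule ℝ (Rn n → V) where
  carrier := {q | PolyDeg m q}
  zero_mem' := polyDeg_const m 0
  add_mem' := fun hf hg => polyDeg_add hf hg
  smul_mem' := fun c _ hf => polyDeg_smul c hf

lemma polyDeg_eq_of_fderiv_zero {V : Type*} [NormedAddCommGroup V] [NormedSpace ℝ V]
    {q : Rn n → V} (hc : ContDiff ℝ (⊤ : ℕ∞) q) (hd : ∀ x, fderiv ℝ q x = 0) (x y : Rn n) :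
    q x = q y :=
  is_const_of_fderiv_eq_zero (hc.differentiable (by simp)) hd x y

/-- Finite-dimensionality of the polynomial space. -/
lemma polySub_finiteDimensional (n : ℕ) :
    ∀ (m : ℕ) (V : Type u) [NormedAddCommGroup V] [NormedSpace ℝ V]
      [FiniteDimensional ℝ V], FiniteDimensional ℝ (polySub n m V) := by
  intro m
  induction m with
  | zero =>
    intro V _ _ _
    let ev : ↥(polySub n 0 V) →ₗ[ℝ] V :=
      { toFun := fun q => (q : Rn n → V) 0
        map_add' := fun a b => rfl
        map_smul' := fun c a => rfl }
    refine FiniteDimensional.of_injective ev fun a b hab => ?_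
    have ha := polyDeg_zero_iff.1 a.2
    have hb := polyDeg_zero_iff.1 b.2
    ext x
    calc (a : Rn n → V) x = (a : Rn n → V) 0 := polyDeg_eq_of_fderiv_zero ha.1 ha.2 x 0
    _ = (b : Rn n → V) 0 := hab
    _ = (b : Rn n → V) x := polyDeg_eq_of_fderiv_zero hb.1 hb.2 0 x
  | succ m ih =>
    intro V _ _ _
    haveI := ih (Rn n →L[ℝ] V)
    let Φ : ↥(polySub n (m+1) V) →ₗ[ℝ] V × ↥(polySub n m (Rn n →L[ℝ] V)) :=
      { toFun := fun q => ((q : Rn n → V) 0, ⟨fderiv ℝ (q : Rn n → V),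
          (polyDeg_succ_iff.1 q.2).2⟩)
        map_add' := fun a b => by
          have ha := (polyDeg_succ_iff.1 a.2).1
          have hb := (polyDeg_succ_iff.1 b.2).1
          refine Prod.ext rfl (Subtype.ext ?_)
          funext x
          exact fderiv_fun_add ((ha.differentiable (by simp)).differentiableAt)
            ((hb.differentiable (by simp)).differentiableAt)
        map_smul' := fun c a => by
          have ha := (polyDeg_succ_iff.1 a.2).1
          refine Prod.ext rfl (Subtype.ext ?_)
          funext x
          exact fderiv_fun_const_smul ((ha.differentiable (by simp)).differentiableAt) c }
    refine FiniteDimensional.of_injective Φ fun a b hab => ?_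
    have h0 : (a : Rn n → V) 0 = (b : Rn n → V) 0 := congrArg Prod.fst hab
    have h1 : fderiv ℝ (a : Rn n → V) = fderiv ℝ (b : Rn n → V) :=
      congrArg Subtype.val (congrArg Prod.snd hab)
    have ha := (polyDeg_succ_iff.1 a.2).1
    have hb := (polyDeg_succ_iff.1 b.2).1
    have key : ∀ x, fderiv ℝ (fun y => (a : Rn n → V) y - (b : Rn n → V) y) x = 0 := by
      intro x
      rw [fderiv_fun_sub ((ha.differentiable (by simp)).differentiableAt)
        ((hb.differentiable (by simp)).differentiableAt), h1, sub_self]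
    ext x
    have hsub := polyDeg_eq_of_fderiv_zero (ha.sub hb) key x 0
    rw [h0, sub_self] at hsub
    exact sub_eq_zero.1 hsub

/-- A polynomial vanishing on a ball vanishes everywhere. -/
lemma polyDeg_eq_zero_of_ball (n : ℕ) :
    ∀ (m : ℕ) {V : Type u} [NormedAddCommGroup V] [NormedSpace ℝ V]
      {q : Rn n → V} {s : ℝ}, 0 < s → PolyDeg m q →
      (∀ x ∈ ball (0 : Rn n) s, q x = 0) → ∀ x, q x = 0 := by
  intro m
  induction m with
  | zero =>
    intro V _ _ q s hs hq hball x
    obtain ⟨hc, hd⟩ := polyDeg_zero_iff.1 hq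
    rw [polyDeg_eq_of_fderiv_zero hc hd x 0]
    exact hball 0 (mem_ball_self hs)
  | succ m ih =>
    intro V _ _ q s hs hq hball x
    obtain ⟨hc, hd⟩ := polyDeg_succ_iff.1 hq
    have hball' : ∀ y ∈ ball (0 : Rn n) s, fderiv ℝ q y = 0 := by
      intro y hy
      have hev : q =ᶠ[𝓝 y] (fun _ => (0 : V)) := by
        filter_upwards [isOpen_ball.mem_nhds hy] with z hz
        exact hball z hz
      rw [hev.fderiv_eq]
      exact fderiv_const_apply 0
    have hzero : ∀ y, fderiv ℝ q y = 0 := ih hs hd hball'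
    rw [polyDeg_eq_of_fderiv_zero hc hzero x 0]
    exact hball 0 (mem_ball_self hs)

/-- Polynomials are stable under affine substitution `y ↦ x₀ + r • y`. -/
lemma polyDeg_comp_affine (n : ℕ) :
    ∀ (m : ℕ) {V : Type u} [NormedAddCommGroup V] [NormedSpace ℝ V]
      {q : Rn n → V}, PolyDeg m q → ∀ (x₀ : Rn n) (r : ℝ),
      PolyDeg m (fun y => q (x₀ + r • y)) := by
  intro m
  induction m with
  | zero =>
    intro V _ _ q hq x₀ r
    obtain ⟨hc, hd⟩ := polyDeg_zero_iff.1 hq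
    have : (fun y : Rn n => q (x₀ + r • y)) = fun _ => q 0 := by
      funext y
      exact polyDeg_eq_of_fderiv_zero hc hd _ 0
    rw [this]
    exact polyDeg_const 0 (q 0)
  | succ m ih =>
    intro V _ _ q hq x₀ r
    obtain ⟨hc, hd⟩ := polyDeg_succ_iff.1 hq
    have hT : ContDiff ℝ (⊤ : ℕ∞) (fun y : Rn n => x₀ + r • y) :=
      contDiff_const.add (contDiff_id.const_smul r)
    have hcomp : ContDiff ℝ (⊤ : ℕ∞) (fun y => q (x₀ + r • y)) := hc.comp hT
    have hTd : ∀ y : Rn n, HasFDerivAt (fun y : Rn n => x₀ + r • y)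
        (r • ContinuousLinearMap.id ℝ (Rn n)) y := by
      intro y
      exact ((hasFDerivAt_id y).const_smul r).const_add x₀
    have key : fderiv ℝ (fun y => q (x₀ + r • y))
        = fun y => r • (fderiv ℝ q (x₀ + r • y)) := by
      funext y
      have hq' : HasFDerivAt q (fderiv ℝ q (x₀ + r • y)) (x₀ + r • y) :=
        ((hc.differentiable (by simp)) _).hasFDerivAt
      have hco := hq'.comp y (hTd y)
      have : (fderiv ℝ q (x₀ + r • y)).comp (r • ContinuousLinearMap.id ℝ (Rn n))
          = r • fderiv ℝ q (x₀ + r • y) := by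
        ext v
        simp
      rw [← this]
      exact hco.fderiv
    refine polyDeg_succ_iff.2 ⟨hcomp, ?_⟩
    rw [key]
    exact polyDeg_smul r (ih hd x₀ r)

lemma integrableOn_ball_of_continuous {V : Type*} [NormedAddCommGroup V]
    {f : Rn n → V} (hf : Continuous f) (x₀ : Rn n) (ρ : ℝ) :
    IntegrableOn f (ball x₀ ρ) volume :=
  (hf.continuousOn.integrableOn_compact (isCompact_closedBall x₀ ρ)).mono_set
    ball_subset_closedBall

lemma integral_ball_scale {V : Type*} [NormedAddCommGroup V] [NormedSpace ℝ V]
    (hn : 1 ≤ n) (q : Rn n → V) (hq : Continuous q) (x₀ : Rn n) {r s : ℝ}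
    (hr : 0 < r) (hs : 0 < s) :
    ∫ x in ball x₀ (s * r), ‖q x‖ = r ^ n * ∫ y in ball (0 : Rn n) s, ‖q (x₀ + r • y)‖ := by
  have hmb : ∀ (c : Rn n) (ρ : ℝ), MeasurableSet (ball c ρ) := fun c ρ => measurableSet_ball
  have step1 : ∫ x in ball x₀ (s * r), ‖q x‖
      = ∫ y, (ball (0 : Rn n) (s * r)).indicator (fun z => ‖q (x₀ + z)‖) y := by
    rw [← integral_indicator (hmb x₀ (s*r)), ← integral_add_left_eq_self
      (fun x => (ball x₀ (s * r)).indicator (fun z => ‖q z‖) x) x₀]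
    congr 1
    funext y
    by_cases hy : y ∈ ball (0 : Rn n) (s * r)
    · rw [Set.indicator_of_mem hy, Set.indicator_of_mem]
      rw [mem_ball, dist_eq_norm] at hy ⊢
      simpa using hy
    · rw [Set.indicator_of_notMem hy, Set.indicator_of_notMem]
      rw [mem_ball, dist_eq_norm] at hy ⊢
      simpa using hy
  have step2 : ∫ y, (ball (0 : Rn n) (s * r)).indicator (fun z => ‖q (x₀ + z)‖) y
      = |(r ^ n)⁻¹|⁻¹ * ∫ y, (ball (0 : Rn n) s).indicator (fun z => ‖q (x₀ + r • z)‖) y := by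
    have hcs := Measure.integral_comp_smul (μ := volume)
      (f := fun z : Rn n => (ball (0 : Rn n) (s * r)).indicator (fun z => ‖q (x₀ + z)‖) z) r
    rw [finrank_euclideanSpace_fin] at hcs
    have heq : (fun y : Rn n => (ball (0 : Rn n) (s * r)).indicator
        (fun z => ‖q (x₀ + z)‖) (r • y))
        = fun y => (ball (0 : Rn n) s).indicator (fun z => ‖q (x₀ + r • z)‖) y := by
      funext y
      have hmem : r • y ∈ ball (0 : Rn n) (s * r) ↔ y ∈ ball (0 : Rn n) s := by
        simp only [mem_ball, dist_zero_right, norm_smul, Real.norm_eq_abs, abs_of_pos hr]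
        rw [mul_comm s r]
        exact mul_lt_mul_iff_right₀ hr
      by_cases hy : y ∈ ball (0 : Rn n) s
      · rw [Set.indicator_of_mem (hmem.2 hy), Set.indicator_of_mem hy]
      · rw [Set.indicator_of_notMem (fun h => hy (hmem.1 h)), Set.indicator_of_notMem hy]
    rw [heq] at hcs
    have habs : |(r ^ n)⁻¹| ≠ 0 := by positivity
    rw [hcs, smul_eq_mul, ← mul_assoc, inv_mul_cancel₀ habs, one_mul]
  rw [step1, step2, integral_indicator (hmb 0 s)]
  have : |(r ^ n)⁻¹|⁻¹ = r ^ n := by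
    rw [abs_inv, inv_inv, abs_of_pos (by positivity)]
  rw [this]

lemma avg_ball_scale {V : Type*} [NormedAddCommGroup V] [NormedSpace ℝ V]
    (hn : 1 ≤ n) (q : Rn n → V) (hq : Continuous q) (x₀ : Rn n) {r s : ℝ}
    (hr : 0 < r) (hs : 0 < s) :
    ⨍ x in ball x₀ (s * r), ‖q x‖ = ⨍ y in ball (0 : Rn n) s, ‖q (x₀ + r • y)‖ := by
  haveI : Nontrivial (Rn n) := by
    apply Module.nontrivial_of_finrank_pos (R := ℝ)
    rw [finrank_euclideanSpace_fin]; omega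
  have hvol : (volume (ball x₀ (s * r))).toReal
      = r ^ n * (volume (ball (0 : Rn n) s)).toReal := by
    rw [Measure.addHaar_ball volume x₀ (by positivity : (0:ℝ) ≤ s * r),
      Measure.addHaar_ball volume (0 : Rn n) hs.le, finrank_euclideanSpace_fin,
      mul_pow, ENNReal.ofReal_mul (by positivity), ENNReal.toReal_mul, ENNReal.toReal_mul,
      ENNReal.toReal_mul, ENNReal.toReal_ofReal (by positivity),
      ENNReal.toReal_ofReal (by positivity)]
    ring
  rw [setAverage_eq, setAverage_eq, measureReal_def, measureReal_def, integral_ball_scale hn q hq x₀ hr hs, hvol,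
    smul_eq_mul, smul_eq_mul, mul_inv]
  have hrn : (r : ℝ) ≠ 0 := ne_of_gt hr
  rw [show (r ^ n)⁻¹ * (volume (ball (0:Rn n) s)).toReal⁻¹
        * (r ^ n * ∫ y in ball (0 : Rn n) s, ‖q (x₀ + r • y)‖)
      = ((volume (ball (0:Rn n) s)).toReal⁻¹ * ∫ y in ball (0 : Rn n) s, ‖q (x₀ + r • y)‖)
        * ((r ^ n)⁻¹ * r ^ n) from by ring,
    inv_mul_cancel₀ (pow_ne_zero n hrn), mul_one]

/-- On a finite-dimensional real vector space, any linear map into a normed space is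
bounded with respect to any norm. -/
lemma exists_bound_of_linear {E : Type u} {F : Type v} [AddCommGroup E] [Module ℝ E]
    [Module.Finite ℝ E] (N : AddGroupNorm E)
    (hsmul : ∀ (c : ℝ) (x : E), N (c • x) ≤ ‖c‖ * N x)
    [NormedAddCommGroup F] [NormedSpace ℝ F] (L : E →ₗ[ℝ] F) :
    ∃ C : ℝ, 0 < C ∧ ∀ x, ‖L x‖ ≤ C * N x := by
  letI : NormedAddCommGroup E := N.toNormedAddCommGroup
  letI : NormedSpace ℝ E := ⟨hsmul⟩
  haveI : FiniteDimensional ℝ E := ‹Module.Finite ℝ E›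
  let Lc := LinearMap.toContinuousLinearMap L
  refine ⟨‖Lc‖ + 1, by positivity, fun x => ?_⟩
  have h1 : ‖L x‖ ≤ ‖Lc‖ * ‖x‖ := Lc.le_opNorm x
  have h2 : ‖x‖ = N x := rfl
  rw [h2] at h1
  refine h1.trans (mul_le_mul_of_nonneg_right (by linarith) (apply_nonneg N x))

/-- The key inverse estimate: the derivative of a polynomial on the closed unit ball is
controlled by the integral of the polynomial over the unit ball. -/
lemma polyDeg_fderiv_bound (m : ℕ) (V : Type*) [NormedAddCommGroup V] [NormedSpace ℝ V]
    [FiniteDimensional ℝ V] :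
    ∃ C : ℝ, 0 < C ∧ ∀ q : Rn n → V, PolyDeg m q → ∀ x ∈ closedBall (0 : Rn n) 1,
      ‖fderiv ℝ q x‖ ≤ C * ∫ y in ball (0 : Rn n) 1, ‖q y‖ := by
  set P := polySub n m V with hP
  have hinb : ∀ q : Rn n → V, Continuous q →
      IntegrableOn (fun y => ‖q y‖) (ball (0 : Rn n) 1) volume := fun q hq =>
    integrableOn_ball_of_continuous hq.norm 0 1
  let N : AddGroupNorm ↥P :=
    { toFun := fun q => ∫ y in ball (0 : Rn n) 1, ‖(q : Rn n → V) y‖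
      map_zero' := by simp
      add_le' := fun a b => by
        have ia := hinb _ a.2.1.continuous
        have ib := hinb _ b.2.1.continuous
        have : ∀ y, ‖(↑(a + b) : Rn n → V) y‖ ≤ ‖(a : Rn n → V) y‖ + ‖(b : Rn n → V) y‖ := by
          intro y
          exact norm_add_le _ _
        calc ∫ y in ball (0 : Rn n) 1, ‖(↑(a + b) : Rn n → V) y‖
            ≤ ∫ y in ball (0 : Rn n) 1, (‖(a : Rn n → V) y‖ + ‖(b : Rn n → V) y‖) := by
              apply integral_mono ?_ (ia.add ib) this
              exact hinb _ ((a.2.1.add b.2.1).continuous)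
        _ = _ := integral_add ia ib
      neg' := fun a => by simp
      eq_zero_of_map_eq_zero' := fun a ha => by
        have hcont := a.2.1.continuous
        have h0 : (fun y => ‖(a : Rn n → V) y‖) =ᵐ[volume.restrict (ball (0 : Rn n) 1)] 0 :=
          (integral_eq_zero_iff_of_nonneg (fun y => norm_nonneg _)
            (hinb _ hcont)).1 ha
        have hm0 : volume.restrict (ball (0 : Rn n) 1)
            {y | (a : Rn n → V) y ≠ 0} = 0 := by
          have := Filter.eventuallyEq_iff_exists_mem.1 h0
          have hae : ∀ᵐ y ∂(volume.restrict (ball (0 : Rn n) 1)),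
              ‖(a : Rn n → V) y‖ = 0 := h0
          have : {y | (a : Rn n → V) y ≠ 0} ⊆ {y | ¬ ‖(a : Rn n → V) y‖ = (0 : ℝ)} := by
            intro y hy
            simpa using hy
          exact measure_mono_null this hae
        have hopen : IsOpen ({y | (a : Rn n → V) y ≠ 0} ∩ ball (0 : Rn n) 1) :=
          (isOpen_ne_fun hcont continuous_const).inter isOpen_ball
        have hball0 : volume ({y | (a : Rn n → V) y ≠ 0} ∩ ball (0 : Rn n) 1) = 0 := by
          rw [Measure.restrict_apply' measurableSet_ball] at hm0
          exact hm0
        have hempty := hopen.eq_empty_of_measure_zero hball0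
        have hzero : ∀ y ∈ ball (0 : Rn n) 1, (a : Rn n → V) y = 0 := by
          intro y hy
          by_contra hne
          have hmem : y ∈ {y | (a : Rn n → V) y ≠ 0} ∩ ball (0 : Rn n) 1 := ⟨hne, hy⟩
          rw [hempty] at hmem
          exact hmem
        have := polyDeg_eq_zero_of_ball n m one_pos a.2 hzero
        exact Subtype.ext (funext this) }
  have hsmul : ∀ (c : ℝ) (q : ↥P), N (c • q) ≤ ‖c‖ * N q := by
    intro c q
    refine le_of_eq ?_
    show (∫ y in ball (0 : Rn n) 1, ‖(↑(c • q) : Rn n → V) y‖)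
      = ‖c‖ * ∫ y in ball (0 : Rn n) 1, ‖(q : Rn n → V) y‖
    rw [← integral_const_mul]
    congr 1
    funext y
    show ‖c • (q : Rn n → V) y‖ = ‖c‖ * ‖(q : Rn n → V) y‖
    exact norm_smul c _
  haveI : FiniteDimensional ℝ ↥P := polySub_finiteDimensional n m V
  haveI : CompactSpace ↥(closedBall (0 : Rn n) 1) :=
    isCompact_iff_compactSpace.1 (isCompact_closedBall _ _)
  let Ψ : ↥P →ₗ[ℝ] C(↥(closedBall (0 : Rn n) 1), Rn n →L[ℝ] V) :=
    { toFun := fun q =>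
        ⟨fun x => fderiv ℝ (q : Rn n → V) x.1,
          (q.2.1.continuous_fderiv (by simp)).comp continuous_subtype_val⟩
      map_add' := fun a b => by
        refine ContinuousMap.ext fun x => ?_
        exact fderiv_fun_add ((a.2.1.differentiable (by simp)) _) ((b.2.1.differentiable (by simp)) _)
      map_smul' := fun c a => by
        refine ContinuousMap.ext fun x => ?_
        exact fderiv_fun_const_smul ((a.2.1.differentiable (by simp)) _) c }
  obtain ⟨C, hC, hbound⟩ := exists_bound_of_linear (F := C(↥(closedBall (0 : Rn n) 1), Rn n →L[ℝ] V)) N hsmul Ψ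
  refine ⟨C, hC, fun q hq x hx => ?_⟩
  have h1 : ‖fderiv ℝ q x‖ ≤ ‖Ψ ⟨q, hq⟩‖ :=
    ContinuousMap.norm_coe_le_norm (Ψ ⟨q, hq⟩) ⟨x, hx⟩
  have h2 := hbound ⟨q, hq⟩
  have h3 : N (⟨q, hq⟩ : ↥P) = ∫ y in ball (0 : Rn n) 1, ‖q y‖ := rfl
  rw [h3] at h2
  exact h1.trans h2

end Aux

section Thm8

variable {n : ℕ} {V : Type*} [NormedAddCommGroup V] [NormedSpace ℝ V]
  [FiniteDimensional ℝ V]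

theorem inverse_estimate_for_polynomials_vanishing_at_center
    (hn : 1 ≤ n) (m : ℕ) :
    ∃ c : ℝ, 0 < c ∧
      ∀ (x₀ : Rn n) (r : ℝ), 0 < r → ∀ lam ∈ Set.Ioc (0 : ℝ) 1,
        ∀ q : Rn n → V, PolyDeg m q → q x₀ = 0 →
          ⨍ x in ball x₀ (lam * r), ‖q x‖ ≤ c * lam * ⨍ x in ball x₀ r, ‖q x‖ := by
  obtain ⟨C, hC, hbd⟩ := polyDeg_fderiv_bound (n := n) m V
  have hvol1 : 0 < (volume (ball (0 : Rn n) 1)).toReal :=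
    ENNReal.toReal_pos (measure_ball_pos volume _ one_pos).ne' measure_ball_lt_top.ne
  refine ⟨C * (volume (ball (0 : Rn n) 1)).toReal, by positivity, ?_⟩
  intro x₀ r hr lam hlam q hq hq0
  obtain ⟨hlam0, hlam1⟩ := hlam
  have hqc : Continuous q := hq.1.continuous
  set p : Rn n → V := fun y => q (x₀ + r • y) with hp
  have hpP : PolyDeg m p := polyDeg_comp_affine n m hq x₀ r
  have hpc : Continuous p := hpP.1.continuous
  have hp0 : p 0 = 0 := by
    rw [hp]
    simp only [smul_zero, add_zero]
    exact hq0
  have e1 : ⨍ x in ball x₀ (lam * r), ‖q x‖ = ⨍ y in ball (0 : Rn n) lam, ‖p y‖ :=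
    avg_ball_scale hn q hqc x₀ hr hlam0
  have e2 : ⨍ x in ball x₀ r, ‖q x‖ = ⨍ y in ball (0 : Rn n) 1, ‖p y‖ := by
    have := avg_ball_scale hn q hqc x₀ hr one_pos
    rwa [one_mul] at this
  rw [e1, e2]
  have hInonneg : (0:ℝ) ≤ ∫ y in ball (0 : Rn n) 1, ‖p y‖ :=
    integral_nonneg fun y => norm_nonneg _
  have hMnonneg : (0:ℝ) ≤ C * ∫ y in ball (0 : Rn n) 1, ‖p y‖ :=
    mul_nonneg hC.le hInonneg
  have hptbound : ∀ x ∈ ball (0 : Rn n) lam,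
      ‖p x‖ ≤ (C * ∫ y in ball (0 : Rn n) 1, ‖p y‖) * lam := by
    intro x hx
    rw [mem_ball, dist_zero_right] at hx
    have hx1 : x ∈ closedBall (0 : Rn n) 1 := by
      rw [mem_closedBall, dist_zero_right]
      linarith
    have h0' : (0 : Rn n) ∈ closedBall (0 : Rn n) 1 := mem_closedBall_self zero_le_one
    have hmvt := Convex.norm_image_sub_le_of_norm_fderiv_le
      (fun y _ => (hpP.1.differentiable (by simp)) y)
      (fun y hy => hbd p hpP y hy) (convex_closedBall (0 : Rn n) 1) h0' hx1
    rw [hp0, sub_zero, sub_zero] at hmvt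
    calc ‖p x‖ ≤ (C * ∫ y in ball (0 : Rn n) 1, ‖p y‖) * ‖x‖ := hmvt
    _ ≤ _ := mul_le_mul_of_nonneg_left hx.le hMnonneg
  have hvlam : 0 < (volume (ball (0 : Rn n) lam)).toReal :=
    ENNReal.toReal_pos (measure_ball_pos volume _ hlam0).ne' measure_ball_lt_top.ne
  have havg : ⨍ y in ball (0 : Rn n) lam, ‖p y‖
      ≤ (C * ∫ y in ball (0 : Rn n) 1, ‖p y‖) * lam := by
    rw [setAverage_eq, smul_eq_mul, measureReal_def]
    have hIle : ∫ y in ball (0 : Rn n) lam, ‖p y‖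
        ≤ ((C * ∫ y in ball (0 : Rn n) 1, ‖p y‖) * lam)
          * (volume (ball (0 : Rn n) lam)).toReal := by
      have h1 : ∫ y in ball (0 : Rn n) lam, ‖p y‖
          ≤ ∫ _ in ball (0 : Rn n) lam, ((C * ∫ y in ball (0 : Rn n) 1, ‖p y‖) * lam) := by
        refine setIntegral_mono_on (integrableOn_ball_of_continuous hpc.norm 0 lam)
          (integrableOn_const measure_ball_lt_top.ne) measurableSet_ball hptbound
      rw [setIntegral_const, smul_eq_mul, measureReal_def] at h1
      linarith [h1]
    calc (volume (ball (0 : Rn n) lam)).toReal⁻¹ * ∫ y in ball (0 : Rn n) lam, ‖p y‖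
        ≤ (volume (ball (0 : Rn n) lam)).toReal⁻¹
          * (((C * ∫ y in ball (0 : Rn n) 1, ‖p y‖) * lam)
            * (volume (ball (0 : Rn n) lam)).toReal) :=
          mul_le_mul_of_nonneg_left hIle (inv_nonneg.2 hvlam.le)
    _ = (C * ∫ y in ball (0 : Rn n) 1, ‖p y‖) * lam := by
        field_simp
  refine havg.trans (le_of_eq ?_)
  rw [setAverage_eq, smul_eq_mul, measureReal_def]
  field_simp


end Thm8
end
end
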